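/- Theorem 2.1, energy stability part (semi-discrete scheme): Let Δt > 0, M > 0, β > 0, α ∈ ℝ, F(s) = s^4/4 (so F'(s) = s^3) and E_1(φ) = ∫_Ω F(φ) dx. Let φ^{n-1}, φ^n, φ^{n+1}, ψ^n, ψ^{n+1}, μ^{n+1/2} be smooth functions on the closure of Ω and r^n, r^{n+1} real numbers satisfying, with f^{n+1/2} = (f^{n+1} + f^n)/2 and φ̃^{n+1/2} = (3φ^n - φ^{n-1})/2: (i) ψ^{n+1} - ψ^n + βΔt ψ^{n+1/2} = MΔt Δμ^{n+1/2} in Ω; (ii) Δt ψ^{n+1/2} = φ^{n+1} - φ^n; (iii) μ^{n+1/2} = Δ^2 φ^{n+1/2} + 2Δφ̃^{n+1/2} + α φ^{n+1/2} + (r^{n+1/2}/√(E_1(φ̃^{n+1/2}))) F'(φ̃^{n+1/2}); (iv) r^{n+1} - r^n = (1/(2√(E_1(φ̃^{n+1/2})))) (F'(φ̃^{n+1/2}), φ^{n+1} - φ^n). Assume E_1(φ̃^{n+1/2}) > 0, the boundary conditions ∂_n φ^k = 0 and ∂_n Δφ^k = 0 on ∂Ω for k ∈ {n-1, n, n+1},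 and ∂_n μ^{n+1/2} = 0 on ∂Ω. Assume further that η^n, η^{n+1} are smooth functions on the closure of Ω with ∂_n η^k = 0 on ∂Ω and -Δη^k = ψ^k in Ω for k ∈ {n, n+1}, and set η^{n+1/2} = (η^{n+1} + η^n)/2. Define the modified pseudo energy Ẽ^k = ∫_Ω ( (1/2)(Δφ^k)^2 - |∇φ^k|^2 + (α/2)(φ^k)^2 ) dx + (r^k)^2 + (1/(2M)) ∫_Ω |∇η^k|^2 dx + (1/2) ∫_Ω |∇φ^k - ∇φ^{k-1}|^2 dx. Then Ẽ^{n+1} - Ẽ^n ≤ -(β/M) Δt ∫_Ω |∇η^{n+1/2}|^2 dx. -/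

import Mathlib

open MeasureTheory

/-- Integral over the rectangle `Ω = (0, Lx) × (0, Ly)`. -/
noncomputable def integ (Lx Ly : ℝ) (f : ℝ → ℝ → ℝ) : ℝ :=
  ∫ p in Set.Ioo (0 : ℝ) Lx ×ˢ Set.Ioo (0 : ℝ) Ly, f p.1 p.2

/-- The Laplacian `Δf = ∂²f/∂x² + ∂²f/∂y²` of a function of two real variables. -/
noncomputable def lapC (f : ℝ → ℝ → ℝ) : ℝ → ℝ → ℝ := fun x y =>
  iteratedDeriv 2 (fun t => f t y) x + iteratedDeriv 2 (fun t => f x t) y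

/-- `|∇f|² = (∂f/∂x)² + (∂f/∂y)²`. -/
noncomputable def gradSqC (f : ℝ → ℝ → ℝ) : ℝ → ℝ → ℝ := fun x y =>
  (deriv (fun t => f t y) x) ^ 2 + (deriv (fun t => f x t) y) ^ 2

/-- Homogeneous Neumann boundary condition `∂_n f = 0` on the boundary of
the rectangle `Ω = (0, Lx) × (0, Ly)`. -/
def NeumannC (Lx Ly : ℝ) (f : ℝ → ℝ → ℝ) : Prop :=
  (∀ y ∈ Set.Icc (0 : ℝ) Ly, deriv (fun t => f t y) 0 = 0 ∧ deriv (fun t => f t y) Lx = 0) ∧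
  (∀ x ∈ Set.Icc (0 : ℝ) Lx, deriv (fun t => f x t) 0 = 0 ∧ deriv (fun t => f x t) Ly = 0)

/-- Membership in the open rectangle `Ω = (0, Lx) × (0, Ly)`. -/
def InOmega (Lx Ly x y : ℝ) : Prop := x ∈ Set.Ioo (0 : ℝ) Lx ∧ y ∈ Set.Ioo (0 : ℝ) Ly

/-- Smoothness (on all of `ℝ²`, hence on the closure of `Ω`). -/
def SmoothCl (f : ℝ → ℝ → ℝ) : Prop := ContDiff ℝ (⊤ : ℕ∞) (fun p : ℝ × ℝ => f p.1 p.2)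

/-- The modified pseudo energy
`Ẽ = ∫_Ω ((1/2)(Δφ)² - |∇φ|² + (α/2)φ²) + r² + (1/(2M))∫_Ω |∇η|²
      + (1/2)∫_Ω |∇φ - ∇φ_prev|²`. -/
noncomputable def energyE (Lx Ly M α : ℝ) (φ φprev η : ℝ → ℝ → ℝ) (r : ℝ) : ℝ :=
  integ Lx Ly (fun x y => 1 / 2 * (lapC φ x y) ^ 2 - gradSqC φ x y + α / 2 * (φ x y) ^ 2)
    + r ^ 2 + 1 / (2 * M) * integ Lx Ly (gradSqC η)
    + 1 / 2 * integ Lx Ly (gradSqC (fun x y => φ x y - φprev x y))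

section AuxSAV
noncomputable def pdx (f : ℝ → ℝ → ℝ) : ℝ → ℝ → ℝ := fun x y => deriv (fun t => f t y) x
noncomputable def pdy (f : ℝ → ℝ → ℝ) : ℝ → ℝ → ℝ := fun x y => deriv (fun t => f x t) y

lemma SmoothCl.sliceX {f : ℝ → ℝ → ℝ} (hf : SmoothCl f) (y : ℝ) :
    ContDiff ℝ (⊤ : ℕ∞) (fun t => f t y) := hf.comp (contDiff_id.prodMk contDiff_const)

lemma SmoothCl.sliceY {f : ℝ → ℝ → ℝ} (hf : SmoothCl f) (x : ℝ) :
    ContDiff ℝ (⊤ : ℕ∞) (fun t => f x t) := hf.comp (contDiff_const.prodMk contDiff_id)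

lemma SmoothCl.hasDerivX {f : ℝ → ℝ → ℝ} (hf : SmoothCl f) (x y : ℝ) :
    HasDerivAt (fun t => f t y) (pdx f x y) x :=
  ((hf.sliceX y).differentiable (by simp) x).hasDerivAt

lemma SmoothCl.hasDerivY {f : ℝ → ℝ → ℝ} (hf : SmoothCl f) (x y : ℝ) :
    HasDerivAt (fun t => f x t) (pdy f x y) y :=
  ((hf.sliceY x).differentiable (by simp) y).hasDerivAt

lemma SmoothCl.pdx {f : ℝ → ℝ → ℝ} (hf : SmoothCl f) : SmoothCl (_root_.pdx f) := by
  have h2 : ∀ p : ℝ × ℝ, _root_.pdx f p.1 p.2 = fderiv ℝ (fun q : ℝ × ℝ => f q.1 q.2) p (1, 0) := by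
    intro p
    have hD : HasFDerivAt (fun q : ℝ × ℝ => f q.1 q.2)
        (fderiv ℝ (fun q : ℝ × ℝ => f q.1 q.2) p) p :=
      (hf.differentiable (by simp) p).hasFDerivAt
    have hg : HasDerivAt (fun t : ℝ => (t, p.2)) ((1 : ℝ), (0 : ℝ)) p.1 :=
      (hasDerivAt_id p.1).prodMk (hasDerivAt_const p.1 p.2)
    have := hD.comp_hasDerivAt p.1 hg
    exact this.deriv
  have h1 : ContDiff ℝ (⊤ : ℕ∞) (fun p : ℝ × ℝ => fderiv ℝ (fun q : ℝ × ℝ => f q.1 q.2) p (1, 0)) :=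
    (hf.fderiv_right (by simp)).clm_apply contDiff_const
  unfold SmoothCl
  have : (fun p : ℝ × ℝ => _root_.pdx f p.1 p.2)
      = fun p : ℝ × ℝ => fderiv ℝ (fun q : ℝ × ℝ => f q.1 q.2) p (1, 0) := funext h2
  rw [this]; exact h1

lemma SmoothCl.pdy {f : ℝ → ℝ → ℝ} (hf : SmoothCl f) : SmoothCl (_root_.pdy f) := by
  have h2 : ∀ p : ℝ × ℝ, _root_.pdy f p.1 p.2 = fderiv ℝ (fun q : ℝ × ℝ => f q.1 q.2) p (0, 1) := by
    intro p
    have hD : HasFDerivAt (fun q : ℝ × ℝ => f q.1 q.2)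
        (fderiv ℝ (fun q : ℝ × ℝ => f q.1 q.2) p) p :=
      (hf.differentiable (by simp) p).hasFDerivAt
    have hg : HasDerivAt (fun t : ℝ => (p.1, t)) ((0 : ℝ), (1 : ℝ)) p.2 :=
      (hasDerivAt_const p.2 p.1).prodMk (hasDerivAt_id p.2)
    have := hD.comp_hasDerivAt p.2 hg
    exact this.deriv
  have h1 : ContDiff ℝ (⊤ : ℕ∞) (fun p : ℝ × ℝ => fderiv ℝ (fun q : ℝ × ℝ => f q.1 q.2) p (0, 1)) :=
    (hf.fderiv_right (by simp)).clm_apply contDiff_const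
  unfold SmoothCl
  have : (fun p : ℝ × ℝ => _root_.pdy f p.1 p.2)
      = fun p : ℝ × ℝ => fderiv ℝ (fun q : ℝ × ℝ => f q.1 q.2) p (0, 1) := funext h2
  rw [this]; exact h1






-- basic algebra closures
lemma SmoothCl.addS {f g : ℝ → ℝ → ℝ} (hf : SmoothCl f) (hg : SmoothCl g) :
    SmoothCl (fun x y => f x y + g x y) := ContDiff.add hf hg
lemma SmoothCl.subS {f g : ℝ → ℝ → ℝ} (hf : SmoothCl f) (hg : SmoothCl g) :
    SmoothCl (fun x y => f x y - g x y) := ContDiff.sub hf hg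
lemma SmoothCl.mulS {f g : ℝ → ℝ → ℝ} (hf : SmoothCl f) (hg : SmoothCl g) :
    SmoothCl (fun x y => f x y * g x y) := ContDiff.mul hf hg
lemma SmoothCl.constMulS {f : ℝ → ℝ → ℝ} (hf : SmoothCl f) (c : ℝ) :
    SmoothCl (fun x y => c * f x y) := ContDiff.mul contDiff_const hf
lemma SmoothCl.divConstS {f : ℝ → ℝ → ℝ} (hf : SmoothCl f) (c : ℝ) :
    SmoothCl (fun x y => f x y / c) := ContDiff.div_const hf c
lemma SmoothCl.powS {f : ℝ → ℝ → ℝ} (hf : SmoothCl f) (n : ℕ) :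
    SmoothCl (fun x y => f x y ^ n) := ContDiff.pow hf n
lemma SmoothCl.avgS {f g : ℝ → ℝ → ℝ} (hf : SmoothCl f) (hg : SmoothCl g) :
    SmoothCl (fun x y => (f x y + g x y) / 2) := (hf.addS hg).divConstS 2
lemma SmoothCl.tildeS {f g : ℝ → ℝ → ℝ} (hf : SmoothCl f) (hg : SmoothCl g) :
    SmoothCl (fun x y => (3 * f x y - g x y) / 2) :=
  ((hf.constMulS 3).subS hg).divConstS 2

lemma lapC_eq (f : ℝ → ℝ → ℝ) (x y : ℝ) :
    lapC f x y = pdx (pdx f) x y + pdy (pdy f) x y := by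
  simp [lapC, iteratedDeriv_succ, iteratedDeriv_zero, pdx, pdy]

lemma SmoothCl.lapCS {f : ℝ → ℝ → ℝ} (hf : SmoothCl f) : SmoothCl (lapC f) := by
  have : lapC f = fun x y => _root_.pdx (_root_.pdx f) x y + _root_.pdy (_root_.pdy f) x y := by
    funext x y; exact lapC_eq f x y
  rw [this]; exact hf.pdx.pdx.addS hf.pdy.pdy

lemma gradSqC_eq (f : ℝ → ℝ → ℝ) (x y : ℝ) :
    gradSqC f x y = (pdx f x y) ^ 2 + (pdy f x y) ^ 2 := rfl

-- pointwise linear-combination rules for pdx / pdy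
section comb
variable {f g : ℝ → ℝ → ℝ}

lemma pdx_avg (hf : SmoothCl f) (hg : SmoothCl g) (x y : ℝ) : pdx (fun a b => (f a b + g a b) / 2) x y = (pdx f x y + pdx g x y) / 2 :=
  (((hf.hasDerivX x y).add (hg.hasDerivX x y)).div_const 2).deriv
lemma pdy_avg (hf : SmoothCl f) (hg : SmoothCl g) (x y : ℝ) : pdy (fun a b => (f a b + g a b) / 2) x y = (pdy f x y + pdy g x y) / 2 :=
  (((hf.hasDerivY x y).add (hg.hasDerivY x y)).div_const 2).deriv
lemma pdx_sub (hf : SmoothCl f) (hg : SmoothCl g) (x y : ℝ) : pdx (fun a b => f a b - g a b) x y = pdx f x y - pdx g x y :=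
  ((hf.hasDerivX x y).sub (hg.hasDerivX x y)).deriv
lemma pdy_sub (hf : SmoothCl f) (hg : SmoothCl g) (x y : ℝ) : pdy (fun a b => f a b - g a b) x y = pdy f x y - pdy g x y :=
  ((hf.hasDerivY x y).sub (hg.hasDerivY x y)).deriv
lemma pdx_tilde (hf : SmoothCl f) (hg : SmoothCl g) (x y : ℝ) : pdx (fun a b => (3 * f a b - g a b) / 2) x y
    = (3 * pdx f x y - pdx g x y) / 2 :=
  ((((hf.hasDerivX x y).const_mul 3).sub (hg.hasDerivX x y)).div_const 2).deriv
lemma pdy_tilde (hf : SmoothCl f) (hg : SmoothCl g) (x y : ℝ) : pdy (fun a b => (3 * f a b - g a b) / 2) x y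
    = (3 * pdy f x y - pdy g x y) / 2 :=
  ((((hf.hasDerivY x y).const_mul 3).sub (hg.hasDerivY x y)).div_const 2).deriv

lemma lapC_avg (hf : SmoothCl f) (hg : SmoothCl g) (x y : ℝ) : lapC (fun a b => (f a b + g a b) / 2) x y = (lapC f x y + lapC g x y) / 2 := by
  rw [lapC_eq, lapC_eq, lapC_eq]
  have e1 : _root_.pdx (fun a b => (f a b + g a b) / 2) = fun a b => (pdx f a b + pdx g a b) / 2 := by
    funext a b; exact pdx_avg hf hg a b
  have e2 : _root_.pdy (fun a b => (f a b + g a b) / 2) = fun a b => (pdy f a b + pdy g a b) / 2 := by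
    funext a b; exact pdy_avg hf hg a b
  rw [e1, e2, pdx_avg hf.pdx hg.pdx, pdy_avg hf.pdy hg.pdy]; ring

lemma lapC_sub (hf : SmoothCl f) (hg : SmoothCl g) (x y : ℝ) : lapC (fun a b => f a b - g a b) x y = lapC f x y - lapC g x y := by
  rw [lapC_eq, lapC_eq, lapC_eq]
  have e1 : _root_.pdx (fun a b => f a b - g a b) = fun a b => pdx f a b - pdx g a b := by
    funext a b; exact pdx_sub hf hg a b
  have e2 : _root_.pdy (fun a b => f a b - g a b) = fun a b => pdy f a b - pdy g a b := by
    funext a b; exact pdy_sub hf hg a b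
  rw [e1, e2, pdx_sub hf.pdx hg.pdx, pdy_sub hf.pdy hg.pdy]; ring
end comb

section integLemmas
variable {Lx Ly : ℝ}

lemma integOn {f : ℝ → ℝ → ℝ} (hf : SmoothCl f) :
    IntegrableOn (fun p : ℝ × ℝ => f p.1 p.2)
      (Set.Ioo (0 : ℝ) Lx ×ˢ Set.Ioo (0 : ℝ) Ly) :=
  ((hf.continuous.continuousOn).integrableOn_compact
      (isCompact_Icc.prod isCompact_Icc)).mono_set
    (Set.prod_mono Set.Ioo_subset_Icc_self Set.Ioo_subset_Icc_self)

lemma integ_congr {f g : ℝ → ℝ → ℝ}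
    (h : ∀ x y, InOmega Lx Ly x y → f x y = g x y) :
    integ Lx Ly f = integ Lx Ly g :=
  setIntegral_congr_fun (measurableSet_Ioo.prod measurableSet_Ioo)
    (fun p hp => h p.1 p.2 ⟨hp.1, hp.2⟩)

lemma integ_nonneg {f : ℝ → ℝ → ℝ} (h : ∀ x y, 0 ≤ f x y) :
    0 ≤ integ Lx Ly f :=
  setIntegral_nonneg (measurableSet_Ioo.prod measurableSet_Ioo)
    (fun p _ => h p.1 p.2)

lemma integ_add {f g : ℝ → ℝ → ℝ} (hf : SmoothCl f) (hg : SmoothCl g) :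
    integ Lx Ly (fun x y => f x y + g x y) = integ Lx Ly f + integ Lx Ly g :=
  integral_add (integOn hf) (integOn hg)

lemma integ_smul (c : ℝ) (f : ℝ → ℝ → ℝ) :
    integ Lx Ly (fun x y => c * f x y) = c * integ Lx Ly f :=
  integral_const_mul c _

lemma integ_lin2 {f g : ℝ → ℝ → ℝ} (hf : SmoothCl f) (hg : SmoothCl g) (a b : ℝ) :
    integ Lx Ly (fun x y => a * f x y + b * g x y)
      = a * integ Lx Ly f + b * integ Lx Ly g := by
  rw [integ_add (hf.constMulS a) (hg.constMulS b), integ_smul, integ_smul]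

lemma integ_lin3 {f g h : ℝ → ℝ → ℝ} (hf : SmoothCl f) (hg : SmoothCl g)
    (hh : SmoothCl h) (a b c : ℝ) :
    integ Lx Ly (fun x y => a * f x y + b * g x y + c * h x y)
      = a * integ Lx Ly f + b * integ Lx Ly g + c * integ Lx Ly h := by
  rw [integ_add (f := fun x y => a * f x y + b * g x y)
      ((hf.constMulS a).addS (hg.constMulS b)) (hh.constMulS c),
    integ_lin2 hf hg, integ_smul]

lemma integ_lin4 {f g h k : ℝ → ℝ → ℝ} (hf : SmoothCl f) (hg : SmoothCl g)
    (hh : SmoothCl h) (hk : SmoothCl k) (a b c d : ℝ) :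
    integ Lx Ly (fun x y => a * f x y + b * g x y + c * h x y + d * k x y)
      = a * integ Lx Ly f + b * integ Lx Ly g + c * integ Lx Ly h + d * integ Lx Ly k := by
  rw [integ_add (f := fun x y => a * f x y + b * g x y + c * h x y)
      (((hf.constMulS a).addS (hg.constMulS b)).addS (hh.constMulS c)) (hk.constMulS d),
    integ_lin3 hf hg hh, integ_smul]

lemma integ_lin5 {f g h k l : ℝ → ℝ → ℝ} (hf : SmoothCl f) (hg : SmoothCl g)
    (hh : SmoothCl h) (hk : SmoothCl k) (hl : SmoothCl l) (a b c d e : ℝ) :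
    integ Lx Ly (fun x y => a * f x y + b * g x y + c * h x y + d * k x y + e * l x y)
      = a * integ Lx Ly f + b * integ Lx Ly g + c * integ Lx Ly h + d * integ Lx Ly k
        + e * integ Lx Ly l := by
  rw [integ_add (f := fun x y => a * f x y + b * g x y + c * h x y + d * k x y)
      ((((hf.constMulS a).addS (hg.constMulS b)).addS (hh.constMulS c)).addS (hk.constMulS d))
      (hl.constMulS e),
    integ_lin4 hf hg hh hk, integ_smul]

lemma integ_fubx {f : ℝ → ℝ → ℝ} (hf : SmoothCl f) :
    integ Lx Ly f = ∫ x in Set.Ioo (0 : ℝ) Lx, ∫ y in Set.Ioo (0 : ℝ) Ly, f x y := by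
  have h := integOn (Lx := Lx) (Ly := Ly) hf
  rw [integ, Measure.volume_eq_prod] at *
  exact setIntegral_prod _ h

lemma SmoothCl.transpose {f : ℝ → ℝ → ℝ} (hf : SmoothCl f) :
    SmoothCl (fun y x => f x y) := hf.comp (contDiff_snd.prodMk contDiff_fst)

lemma integ_fuby {f : ℝ → ℝ → ℝ} (hf : SmoothCl f) :
    integ Lx Ly f = ∫ y in Set.Ioo (0 : ℝ) Ly, ∫ x in Set.Ioo (0 : ℝ) Lx, f x y := by
  have h : integ Lx Ly f = integ Ly Lx (fun y x => f x y) := by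
    rw [integ, integ, Measure.volume_eq_prod, ← Measure.prod_restrict, ← Measure.prod_restrict]
    exact (integral_prod_swap (fun p : ℝ × ℝ => f p.1 p.2)).symm
  rw [h]
  exact integ_fubx hf.transpose
end integLemmas

section IBP
variable {Lx Ly : ℝ}

lemma ioo_to_interval {h : ℝ → ℝ} {L : ℝ} (hL : 0 ≤ L) :
    ∫ x in Set.Ioo (0 : ℝ) L, h x = ∫ x in (0 : ℝ)..L, h x := by
  rw [intervalIntegral.integral_of_le hL, integral_Ioc_eq_integral_Ioo]

lemma ibp_x (hLx : 0 ≤ Lx) {f g : ℝ → ℝ → ℝ} (hf : SmoothCl f) (hg : SmoothCl g)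
    (hbc : ∀ y ∈ Set.Icc (0 : ℝ) Ly, pdx g 0 y = 0 ∧ pdx g Lx y = 0) :
    integ Lx Ly (fun x y => f x y * pdx (pdx g) x y)
      = - integ Lx Ly (fun x y => pdx f x y * pdx g x y) := by
  rw [integ_fuby (hf.mulS hg.pdx.pdx), integ_fuby (hf.pdx.mulS hg.pdx), ← integral_neg]
  refine setIntegral_congr_fun measurableSet_Ioo (fun y hy => ?_)
  have hyI : y ∈ Set.Icc (0 : ℝ) Ly := Set.Ioo_subset_Icc_self hy
  have key := intervalIntegral.integral_mul_deriv_eq_deriv_mul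
    (u := fun x => f x y) (v := fun x => pdx g x y)
    (u' := fun x => pdx f x y) (v' := fun x => pdx (pdx g) x y)
    (a := 0) (b := Lx)
    (fun x _ => hf.hasDerivX x y) (fun x _ => hg.pdx.hasDerivX x y)
    (((hf.pdx.sliceX y).continuous).intervalIntegrable 0 Lx)
    (((hg.pdx.pdx.sliceX y).continuous).intervalIntegrable 0 Lx)
  rw [ioo_to_interval hLx, ioo_to_interval hLx, key]
  rw [(hbc y hyI).1, (hbc y hyI).2]
  ring

lemma ibp_y (hLy : 0 ≤ Ly) {f g : ℝ → ℝ → ℝ} (hf : SmoothCl f) (hg : SmoothCl g)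
    (hbc : ∀ x ∈ Set.Icc (0 : ℝ) Lx, pdy g x 0 = 0 ∧ pdy g x Ly = 0) :
    integ Lx Ly (fun x y => f x y * pdy (pdy g) x y)
      = - integ Lx Ly (fun x y => pdy f x y * pdy g x y) := by
  rw [integ_fubx (hf.mulS hg.pdy.pdy), integ_fubx (hf.pdy.mulS hg.pdy), ← integral_neg]
  refine setIntegral_congr_fun measurableSet_Ioo (fun x hx => ?_)
  have hxI : x ∈ Set.Icc (0 : ℝ) Lx := Set.Ioo_subset_Icc_self hx
  have key := intervalIntegral.integral_mul_deriv_eq_deriv_mul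
    (u := fun t => f x t) (v := fun t => pdy g x t)
    (u' := fun t => pdy f x t) (v' := fun t => pdy (pdy g) x t)
    (a := 0) (b := Ly)
    (fun t _ => hf.hasDerivY x t) (fun t _ => hg.pdy.hasDerivY x t)
    (((hf.pdy.sliceY x).continuous).intervalIntegrable 0 Ly)
    (((hg.pdy.pdy.sliceY x).continuous).intervalIntegrable 0 Ly)
  rw [ioo_to_interval hLy, ioo_to_interval hLy, key]
  rw [(hbc x hxI).1, (hbc x hxI).2]
  ring

lemma green (hLx : 0 ≤ Lx) (hLy : 0 ≤ Ly) {f g : ℝ → ℝ → ℝ}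
    (hf : SmoothCl f) (hg : SmoothCl g) (hbc : NeumannC Lx Ly g) :
    integ Lx Ly (fun x y => f x y * lapC g x y)
      = - integ Lx Ly (fun x y => pdx f x y * pdx g x y + pdy f x y * pdy g x y) := by
  have h1 : integ Lx Ly (fun x y => f x y * lapC g x y)
      = integ Lx Ly (fun x y => f x y * pdx (pdx g) x y + f x y * pdy (pdy g) x y) :=
    integ_congr (fun x y _ => by rw [lapC_eq]; ring)
  rw [h1, integ_add (hf.mulS hg.pdx.pdx) (hf.mulS hg.pdy.pdy),
    ibp_x hLx hf hg hbc.1, ibp_y hLy hf hg hbc.2,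
    integ_add (hf.pdx.mulS hg.pdx) (hf.pdy.mulS hg.pdy)]
  ring
end IBP

section NeumannComb
variable {Lx Ly : ℝ} {f g : ℝ → ℝ → ℝ}

lemma neumannC_iff :
    NeumannC Lx Ly f ↔
      (∀ y ∈ Set.Icc (0 : ℝ) Ly, pdx f 0 y = 0 ∧ pdx f Lx y = 0) ∧
      (∀ x ∈ Set.Icc (0 : ℝ) Lx, pdy f x 0 = 0 ∧ pdy f x Ly = 0) := Iff.rfl

lemma neumann_avg (hf : SmoothCl f) (hg : SmoothCl g)
    (nf : NeumannC Lx Ly f) (ng : NeumannC Lx Ly g) :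
    NeumannC Lx Ly (fun a b => (f a b + g a b) / 2) := by
  rw [neumannC_iff] at *
  constructor
  · intro y hy
    rw [pdx_avg hf hg, pdx_avg hf hg, (nf.1 y hy).1, (ng.1 y hy).1,
      (nf.1 y hy).2, (ng.1 y hy).2]
    norm_num
  · intro x hx
    rw [pdy_avg hf hg, pdy_avg hf hg, (nf.2 x hx).1, (ng.2 x hx).1,
      (nf.2 x hx).2, (ng.2 x hx).2]
    norm_num

lemma neumann_sub (hf : SmoothCl f) (hg : SmoothCl g)
    (nf : NeumannC Lx Ly f) (ng : NeumannC Lx Ly g) :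
    NeumannC Lx Ly (fun a b => f a b - g a b) := by
  rw [neumannC_iff] at *
  constructor
  · intro y hy
    rw [pdx_sub hf hg, pdx_sub hf hg, (nf.1 y hy).1, (ng.1 y hy).1,
      (nf.1 y hy).2, (ng.1 y hy).2]
    norm_num
  · intro x hx
    rw [pdy_sub hf hg, pdy_sub hf hg, (nf.2 x hx).1, (ng.2 x hx).1,
      (nf.2 x hx).2, (ng.2 x hx).2]
    norm_num

lemma neumann_tilde (hf : SmoothCl f) (hg : SmoothCl g)
    (nf : NeumannC Lx Ly f) (ng : NeumannC Lx Ly g) :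
    NeumannC Lx Ly (fun a b => (3 * f a b - g a b) / 2) := by
  rw [neumannC_iff] at *
  constructor
  · intro y hy
    rw [pdx_tilde hf hg, pdx_tilde hf hg, (nf.1 y hy).1, (ng.1 y hy).1,
      (nf.1 y hy).2, (ng.1 y hy).2]
    norm_num
  · intro x hx
    rw [pdy_tilde hf hg, pdy_tilde hf hg, (nf.2 x hx).1, (ng.2 x hx).1,
      (nf.2 x hx).2, (ng.2 x hx).2]
    norm_num

lemma SmoothCl.gradSqS (hf : SmoothCl f) : SmoothCl (gradSqC f) :=
  (hf.pdx.powS 2).addS (hf.pdy.powS 2)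
end NeumannComb


end AuxSAV

set_option maxHeartbeats 2000000

/-- Theorem 2.1, energy stability part (semi-discrete scheme): the second-order
SAV Crank-Nicolson scheme dissipates the modified pseudo energy:
`Ẽ^{n+1} - Ẽ^n ≤ -(β/M) Δt ∫_Ω |∇η^{n+1/2}|²`. -/
theorem semi_discrete_energy_stability
    (Lx Ly : ℝ) (hLx : 0 < Lx) (hLy : 0 < Ly)
    (Δt M β α : ℝ) (hΔt : 0 < Δt) (hM : 0 < M) (hβ : 0 < β)
    (φm φn φp ψn ψp μ ηn ηp : ℝ → ℝ → ℝ) (rn rp : ℝ)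
    (hsm : SmoothCl φm ∧ SmoothCl φn ∧ SmoothCl φp ∧ SmoothCl ψn ∧ SmoothCl ψp ∧
           SmoothCl μ ∧ SmoothCl ηn ∧ SmoothCl ηp)
    (hE1 : 0 < integ Lx Ly (fun x y => ((3 * φn x y - φm x y) / 2) ^ 4 / 4))
    (heq1 : ∀ x y, InOmega Lx Ly x y →
      ψp x y - ψn x y + β * Δt * ((ψp x y + ψn x y) / 2) = M * Δt * lapC μ x y)
    (heq2 : ∀ x y, InOmega Lx Ly x y →
      Δt * ((ψp x y + ψn x y) / 2) = φp x y - φn x y)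
    (heq3 : ∀ x y, InOmega Lx Ly x y →
      μ x y = lapC (lapC (fun a b => (φp a b + φn a b) / 2)) x y
        + 2 * lapC (fun a b => (3 * φn a b - φm a b) / 2) x y
        + α * ((φp x y + φn x y) / 2)
        + (rp + rn) / 2 /
            Real.sqrt (integ Lx Ly (fun a b => ((3 * φn a b - φm a b) / 2) ^ 4 / 4)) *
            ((3 * φn x y - φm x y) / 2) ^ 3)
    (heq4 : rp - rn =
      1 / (2 * Real.sqrt (integ Lx Ly (fun a b => ((3 * φn a b - φm a b) / 2) ^ 4 / 4))) *
        integ Lx Ly (fun x y => ((3 * φn x y - φm x y) / 2) ^ 3 * (φp x y - φn x y)))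
    (hbcφm : NeumannC Lx Ly φm) (hbcφn : NeumannC Lx Ly φn) (hbcφp : NeumannC Lx Ly φp)
    (hbcΔφm : NeumannC Lx Ly (lapC φm)) (hbcΔφn : NeumannC Lx Ly (lapC φn))
    (hbcΔφp : NeumannC Lx Ly (lapC φp))
    (hbcμ : NeumannC Lx Ly μ)
    (hbcηn : NeumannC Lx Ly ηn) (hbcηp : NeumannC Lx Ly ηp)
    (hηn : ∀ x y, InOmega Lx Ly x y → -lapC ηn x y = ψn x y)
    (hηp : ∀ x y, InOmega Lx Ly x y → -lapC ηp x y = ψp x y) :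
    energyE Lx Ly M α φp φn ηp rp - energyE Lx Ly M α φn φm ηn rn ≤
      -(β / M) * Δt * integ Lx Ly (gradSqC (fun a b => (ηp a b + ηn a b) / 2)) := by
  obtain ⟨sφm, sφn, sφp, sψn, sψp, sμ, sηn, sηp⟩ := hsm
  have hLx0 : (0:ℝ) ≤ Lx := hLx.le
  have hLy0 : (0:ℝ) ≤ Ly := hLy.le
  have sηh : SmoothCl (fun a b => (ηp a b + ηn a b) / 2) := sηp.avgS sηn
  have sφh : SmoothCl (fun a b => (φp a b + φn a b) / 2) := sφp.avgS sφn
  have sφt : SmoothCl (fun a b => (3 * φn a b - φm a b) / 2) := sφn.tildeS sφm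
  have sdφ : SmoothCl (fun x y => φp x y - φn x y) := sφp.subS sφn
  have nηh : NeumannC Lx Ly (fun a b => (ηp a b + ηn a b) / 2) := neumann_avg sηp sηn hbcηp hbcηn
  have nφt : NeumannC Lx Ly (fun a b => (3 * φn a b - φm a b) / 2) := neumann_tilde sφn sφm hbcφn hbcφm
  have ndφ : NeumannC Lx Ly (fun x y => φp x y - φn x y) := neumann_sub sφp sφn hbcφp hbcφn
  have nlφh : NeumannC Lx Ly (lapC (fun a b => (φp a b + φn a b) / 2)) := by
    have e : lapC (fun a b => (φp a b + φn a b) / 2) = fun a b => (lapC φp a b + lapC φn a b) / 2 :=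
      funext fun x => funext fun y => lapC_avg sφp sφn x y
    rw [e]; exact neumann_avg sφp.lapCS sφn.lapCS hbcΔφp hbcΔφn
  -- Step 1 : test equation (i) with η^(n+1/2)
  have E0a : integ Lx Ly (fun x y =>
        (ηp x y + ηn x y) / 2 * (ψp x y - ψn x y + β * Δt * ((ψp x y + ψn x y) / 2)))
      = integ Lx Ly (fun x y => (ηp x y + ηn x y) / 2 * (M * Δt * lapC μ x y)) :=
    integ_congr (fun x y h => by rw [heq1 x y h])
  have E0b : integ Lx Ly (fun x y =>
        (ηp x y + ηn x y) / 2 * (ψp x y - ψn x y + β * Δt * ((ψp x y + ψn x y) / 2)))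
      = integ Lx Ly (fun x y =>
          (-1 : ℝ) * ((ηp x y + ηn x y) / 2 * lapC ηp x y)
          + 1 * ((ηp x y + ηn x y) / 2 * lapC ηn x y)
          + (-(β * Δt)) * ((ηp x y + ηn x y) / 2 * lapC (fun a b => (ηp a b + ηn a b) / 2) x y)) :=
    integ_congr (fun x y h => by
      rw [lapC_avg sηp sηn, ← hηp x y h, ← hηn x y h]; ring)
  have E0c : integ Lx Ly (fun x y =>
          (-1 : ℝ) * ((ηp x y + ηn x y) / 2 * lapC ηp x y)
          + 1 * ((ηp x y + ηn x y) / 2 * lapC ηn x y)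
          + (-(β * Δt)) * ((ηp x y + ηn x y) / 2 * lapC (fun a b => (ηp a b + ηn a b) / 2) x y))
      = (-1 : ℝ) * integ Lx Ly (fun x y => (ηp x y + ηn x y) / 2 * lapC ηp x y) + 1 * integ Lx Ly (fun x y => (ηp x y + ηn x y) / 2 * lapC ηn x y) + (-(β * Δt)) * integ Lx Ly (fun x y => (ηp x y + ηn x y) / 2 * lapC (fun a b => (ηp a b + ηn a b) / 2) x y) :=
    integ_lin3 (sηh.mulS sηp.lapCS) (sηh.mulS sηn.lapCS) (sηh.mulS sηh.lapCS) _ _ _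
  have E0d : integ Lx Ly (fun x y => (ηp x y + ηn x y) / 2 * (M * Δt * lapC μ x y))
      = M * Δt * integ Lx Ly (fun x y => (ηp x y + ηn x y) / 2 * lapC μ x y) :=
    (integ_congr (fun x y _ => by ring)).trans
      (integ_smul (M * Δt) (fun x y => (ηp x y + ηn x y) / 2 * lapC μ x y))
  have g1 : integ Lx Ly (fun x y => (ηp x y + ηn x y) / 2 * lapC ηp x y) = - integ Lx Ly (fun x y => (pdx ηp x y + pdx ηn x y) / 2 * pdx ηp x y + (pdy ηp x y + pdy ηn x y) / 2 * pdy ηp x y) :=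
    (green hLx0 hLy0 sηh sηp hbcηp).trans (congrArg Neg.neg (integ_congr (fun x y _ => by
      rw [pdx_avg sηp sηn, pdy_avg sηp sηn])))
  have g2 : integ Lx Ly (fun x y => (ηp x y + ηn x y) / 2 * lapC ηn x y) = - integ Lx Ly (fun x y => (pdx ηp x y + pdx ηn x y) / 2 * pdx ηn x y + (pdy ηp x y + pdy ηn x y) / 2 * pdy ηn x y) :=
    (green hLx0 hLy0 sηh sηn hbcηn).trans (congrArg Neg.neg (integ_congr (fun x y _ => by
      rw [pdx_avg sηp sηn, pdy_avg sηp sηn])))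
  have g3 : integ Lx Ly (fun x y => (ηp x y + ηn x y) / 2 * lapC (fun a b => (ηp a b + ηn a b) / 2) x y) = - integ Lx Ly (gradSqC (fun a b => (ηp a b + ηn a b) / 2)) :=
    (green hLx0 hLy0 sηh sηh nηh).trans (congrArg Neg.neg (integ_congr (fun x y _ => by
      rw [gradSqC_eq]; ring)))
  have g4 : integ Lx Ly (fun x y => (ηp x y + ηn x y) / 2 * lapC μ x y) = integ Lx Ly (fun x y => μ x y * lapC (fun a b => (ηp a b + ηn a b) / 2) x y) := by
    have h1 : integ Lx Ly (fun x y => (ηp x y + ηn x y) / 2 * lapC μ x y) = - integ Lx Ly (fun x y =>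
        pdx (fun a b => (ηp a b + ηn a b) / 2) x y * pdx μ x y + pdy (fun a b => (ηp a b + ηn a b) / 2) x y * pdy μ x y) :=
      green hLx0 hLy0 sηh sμ hbcμ
    have h2 : integ Lx Ly (fun x y => μ x y * lapC (fun a b => (ηp a b + ηn a b) / 2) x y) = - integ Lx Ly (fun x y =>
        pdx μ x y * pdx (fun a b => (ηp a b + ηn a b) / 2) x y + pdy μ x y * pdy (fun a b => (ηp a b + ηn a b) / 2) x y) :=
      green hLx0 hLy0 sμ sηh nηh
    have h3 : integ Lx Ly (fun x y =>
        pdx (fun a b => (ηp a b + ηn a b) / 2) x y * pdx μ x y + pdy (fun a b => (ηp a b + ηn a b) / 2) x y * pdy μ x y)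
        = integ Lx Ly (fun x y =>
        pdx μ x y * pdx (fun a b => (ηp a b + ηn a b) / 2) x y + pdy μ x y * pdy (fun a b => (ηp a b + ηn a b) / 2) x y) :=
      integ_congr (fun x y _ => by ring)
    rw [h1, h2, h3]
  have cgrad : integ Lx Ly (fun x y => (pdx ηp x y + pdx ηn x y) / 2 * pdx ηp x y + (pdy ηp x y + pdy ηn x y) / 2 * pdy ηp x y) - integ Lx Ly (fun x y => (pdx ηp x y + pdx ηn x y) / 2 * pdx ηn x y + (pdy ηp x y + pdy ηn x y) / 2 * pdy ηn x y)
      = 1 / 2 * integ Lx Ly (gradSqC ηp) - 1 / 2 * integ Lx Ly (gradSqC ηn) := by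
    have h1 : integ Lx Ly (fun x y => (1 : ℝ) * ((pdx ηp x y + pdx ηn x y) / 2 * pdx ηp x y + (pdy ηp x y + pdy ηn x y) / 2 * pdy ηp x y) + (-1) * ((pdx ηp x y + pdx ηn x y) / 2 * pdx ηn x y + (pdy ηp x y + pdy ηn x y) / 2 * pdy ηn x y))
        = (1 : ℝ) * integ Lx Ly (fun x y => (pdx ηp x y + pdx ηn x y) / 2 * pdx ηp x y + (pdy ηp x y + pdy ηn x y) / 2 * pdy ηp x y) + (-1) * integ Lx Ly (fun x y => (pdx ηp x y + pdx ηn x y) / 2 * pdx ηn x y + (pdy ηp x y + pdy ηn x y) / 2 * pdy ηn x y) :=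
      integ_lin2 ((((sηp.pdx.addS sηn.pdx).divConstS 2).mulS sηp.pdx).addS
          (((sηp.pdy.addS sηn.pdy).divConstS 2).mulS sηp.pdy))
        ((((sηp.pdx.addS sηn.pdx).divConstS 2).mulS sηn.pdx).addS
          (((sηp.pdy.addS sηn.pdy).divConstS 2).mulS sηn.pdy)) 1 (-1)
    have h2 : integ Lx Ly (fun x y => (1 : ℝ) * ((pdx ηp x y + pdx ηn x y) / 2 * pdx ηp x y + (pdy ηp x y + pdy ηn x y) / 2 * pdy ηp x y) + (-1) * ((pdx ηp x y + pdx ηn x y) / 2 * pdx ηn x y + (pdy ηp x y + pdy ηn x y) / 2 * pdy ηn x y))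
        = integ Lx Ly (fun x y => (1 / 2 : ℝ) * gradSqC ηp x y + (-(1 / 2)) * gradSqC ηn x y) :=
      integ_congr (fun x y _ => by
        rw [gradSqC_eq ηp x y, gradSqC_eq ηn x y]; ring)
    have h3 : integ Lx Ly (fun x y => (1 / 2 : ℝ) * gradSqC ηp x y + (-(1 / 2)) * gradSqC ηn x y)
        = (1 / 2 : ℝ) * integ Lx Ly (gradSqC ηp) + (-(1 / 2)) * integ Lx Ly (gradSqC ηn) :=
      integ_lin2 sηp.gradSqS sηn.gradSqS (1 / 2) (-(1 / 2))
    linarith [h1, h2, h3]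
  have c5 : M * Δt * integ Lx Ly (fun x y => μ x y * lapC (fun a b => (ηp a b + ηn a b) / 2) x y) = M * (-1 * integ Lx Ly (fun x y => (φp x y - φn x y) * μ x y)) := by
    have e1 : Δt * integ Lx Ly (fun x y => μ x y * lapC (fun a b => (ηp a b + ηn a b) / 2) x y)
        = integ Lx Ly (fun x y => Δt * (μ x y * lapC (fun a b => (ηp a b + ηn a b) / 2) x y)) :=
      (integ_smul Δt (fun x y => μ x y * lapC (fun a b => (ηp a b + ηn a b) / 2) x y)).symm
    have e2 : integ Lx Ly (fun x y => Δt * (μ x y * lapC (fun a b => (ηp a b + ηn a b) / 2) x y))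
        = integ Lx Ly (fun x y => (-1 : ℝ) * ((φp x y - φn x y) * μ x y)) :=
      integ_congr (fun x y h => by
        rw [lapC_avg sηp sηn]
        linear_combination (-(Δt * μ x y) / 2) * hηp x y h + (-(Δt * μ x y) / 2) * hηn x y h
          + (-(μ x y)) * heq2 x y h)
    have e3 : integ Lx Ly (fun x y => (-1 : ℝ) * ((φp x y - φn x y) * μ x y)) = -1 * integ Lx Ly (fun x y => (φp x y - φn x y) * μ x y) :=
      integ_smul (-1) (fun x y => (φp x y - φn x y) * μ x y)
    calc M * Δt * integ Lx Ly (fun x y => μ x y * lapC (fun a b => (ηp a b + ηn a b) / 2) x y) = M * (Δt * integ Lx Ly (fun x y => μ x y * lapC (fun a b => (ηp a b + ηn a b) / 2) x y)) := by ring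
    _ = M * (-1 * integ Lx Ly (fun x y => (φp x y - φn x y) * μ x y)) := by rw [e1, e2, e3]
  have F1 : 1 / 2 * integ Lx Ly (gradSqC ηp) - 1 / 2 * integ Lx Ly (gradSqC ηn) + β * Δt * integ Lx Ly (gradSqC (fun a b => (ηp a b + ηn a b) / 2)) = -(M * integ Lx Ly (fun x y => (φp x y - φn x y) * μ x y)) := by
    have E0 : (-1 : ℝ) * integ Lx Ly (fun x y => (ηp x y + ηn x y) / 2 * lapC ηp x y) + 1 * integ Lx Ly (fun x y => (ηp x y + ηn x y) / 2 * lapC ηn x y) + (-(β * Δt)) * integ Lx Ly (fun x y => (ηp x y + ηn x y) / 2 * lapC (fun a b => (ηp a b + ηn a b) / 2) x y)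
        = M * Δt * integ Lx Ly (fun x y => (ηp x y + ηn x y) / 2 * lapC μ x y) := by
      rw [← E0c, ← E0b, E0a, E0d]
    rw [g1, g2, g3, g4] at E0
    linarith [E0, cgrad, c5]

  -- Step 2 : expand (μ, φp - φn) via equation (iii)
  have hSne : Real.sqrt (integ Lx Ly (fun a b => ((3 * φn a b - φm a b) / 2) ^ 4 / 4)) ≠ 0 := ne_of_gt (Real.sqrt_pos.mpr hE1)
  have c2 : integ Lx Ly (fun x y => (φp x y - φn x y) * μ x y) = integ Lx Ly (fun x y => (φp x y - φn x y) * (lapC (lapC (fun a b => (φp a b + φn a b) / 2)) x y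
        + 2 * lapC (fun a b => (3 * φn a b - φm a b) / 2) x y
        + α * ((φp x y + φn x y) / 2)
        + (rp + rn) / 2 / Real.sqrt (integ Lx Ly (fun a b => ((3 * φn a b - φm a b) / 2) ^ 4 / 4)) *
            ((3 * φn x y - φm x y) / 2) ^ 3)) :=
    integ_congr (fun x y h => by rw [heq3 x y h])
  have c3 : integ Lx Ly (fun x y => (φp x y - φn x y) * (lapC (lapC (fun a b => (φp a b + φn a b) / 2)) x y
        + 2 * lapC (fun a b => (3 * φn a b - φm a b) / 2) x y
        + α * ((φp x y + φn x y) / 2)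
        + (rp + rn) / 2 / Real.sqrt (integ Lx Ly (fun a b => ((3 * φn a b - φm a b) / 2) ^ 4 / 4)) *
            ((3 * φn x y - φm x y) / 2) ^ 3)) = integ Lx Ly (fun x y => (1 : ℝ) * ((φp x y - φn x y) * lapC (lapC (fun a b => (φp a b + φn a b) / 2)) x y)
        + 2 * ((φp x y - φn x y) * lapC (fun a b => (3 * φn a b - φm a b) / 2) x y)
        + α * ((φp x y - φn x y) * ((φp x y + φn x y) / 2))
        + ((rp + rn) / 2 / Real.sqrt (integ Lx Ly (fun a b => ((3 * φn a b - φm a b) / 2) ^ 4 / 4))) * (((3 * φn x y - φm x y) / 2) ^ 3 * (φp x y - φn x y))) :=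
    integ_congr (fun x y _ => by ring)
  have c4 : integ Lx Ly (fun x y => (1 : ℝ) * ((φp x y - φn x y) * lapC (lapC (fun a b => (φp a b + φn a b) / 2)) x y)
        + 2 * ((φp x y - φn x y) * lapC (fun a b => (3 * φn a b - φm a b) / 2) x y)
        + α * ((φp x y - φn x y) * ((φp x y + φn x y) / 2))
        + ((rp + rn) / 2 / Real.sqrt (integ Lx Ly (fun a b => ((3 * φn a b - φm a b) / 2) ^ 4 / 4))) * (((3 * φn x y - φm x y) / 2) ^ 3 * (φp x y - φn x y)))
      = (1 : ℝ) * integ Lx Ly (fun x y => (φp x y - φn x y) * lapC (lapC (fun a b => (φp a b + φn a b) / 2)) x y) + 2 * integ Lx Ly (fun x y => (φp x y - φn x y) * lapC (fun a b => (3 * φn a b - φm a b) / 2) x y) + α * integ Lx Ly (fun x y => (φp x y - φn x y) * ((φp x y + φn x y) / 2)) + ((rp + rn) / 2 / Real.sqrt (integ Lx Ly (fun a b => ((3 * φn a b - φm a b) / 2) ^ 4 / 4))) * integ Lx Ly (fun x y => ((3 * φn x y - φm x y) / 2) ^ 3 * (φp x y - φn x y)) :=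
    integ_lin4 (sdφ.mulS sφh.lapCS.lapCS) (sdφ.mulS sφt.lapCS)
      (sdφ.mulS ((sφp.addS sφn).divConstS 2)) ((sφt.powS 3).mulS sdφ) _ _ _ _
  have g5 : integ Lx Ly (fun x y => (φp x y - φn x y) * lapC (lapC (fun a b => (φp a b + φn a b) / 2)) x y) = - integ Lx Ly (fun x y => pdx (fun x y => φp x y - φn x y) x y * pdx (lapC (fun a b => (φp a b + φn a b) / 2)) x y + pdy (fun x y => φp x y - φn x y) x y * pdy (lapC (fun a b => (φp a b + φn a b) / 2)) x y) :=
    green hLx0 hLy0 sdφ sφh.lapCS nlφh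
  have g6 : integ Lx Ly (fun x y => lapC (fun a b => (φp a b + φn a b) / 2) x y * lapC (fun x y => φp x y - φn x y) x y)
      = - integ Lx Ly (fun x y => pdx (lapC (fun a b => (φp a b + φn a b) / 2)) x y * pdx (fun x y => φp x y - φn x y) x y + pdy (lapC (fun a b => (φp a b + φn a b) / 2)) x y * pdy (fun x y => φp x y - φn x y) x y) :=
    green hLx0 hLy0 sφh.lapCS sdφ ndφ
  have g7 : integ Lx Ly (fun x y => pdx (fun x y => φp x y - φn x y) x y * pdx (lapC (fun a b => (φp a b + φn a b) / 2)) x y + pdy (fun x y => φp x y - φn x y) x y * pdy (lapC (fun a b => (φp a b + φn a b) / 2)) x y) = integ Lx Ly (fun x y => pdx (lapC (fun a b => (φp a b + φn a b) / 2)) x y * pdx (fun x y => φp x y - φn x y) x y + pdy (lapC (fun a b => (φp a b + φn a b) / 2)) x y * pdy (fun x y => φp x y - φn x y) x y) :=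
    integ_congr (fun x y _ => by ring)
  have hA1 : integ Lx Ly (fun x y => (φp x y - φn x y) * lapC (lapC (fun a b => (φp a b + φn a b) / 2)) x y) = integ Lx Ly (fun x y => (lapC φp x y + lapC φn x y) / 2 * (lapC φp x y - lapC φn x y)) := by
    rw [g5, g7, ← g6]
    exact integ_congr (fun x y _ => by rw [lapC_avg sφp sφn, lapC_sub sφp sφn])
  have hA2 : integ Lx Ly (fun x y => (φp x y - φn x y) * lapC (fun a b => (3 * φn a b - φm a b) / 2) x y) = - integ Lx Ly (fun x y => (pdx φp x y - pdx φn x y) * ((3 * pdx φn x y - pdx φm x y) / 2) + (pdy φp x y - pdy φn x y) * ((3 * pdy φn x y - pdy φm x y) / 2)) :=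
    (green hLx0 hLy0 sdφ sφt nφt).trans (congrArg Neg.neg (integ_congr (fun x y _ => by
      rw [pdx_sub sφp sφn, pdy_sub sφp sφn, pdx_tilde sφn sφm, pdy_tilde sφn sφm])))
  have hJ : integ Lx Ly (fun x y => ((3 * φn x y - φm x y) / 2) ^ 3 * (φp x y - φn x y)) = 2 * Real.sqrt (integ Lx Ly (fun a b => ((3 * φn a b - φm a b) / 2) ^ 4 / 4)) * (rp - rn) := by
    have h2S : (2 * Real.sqrt (integ Lx Ly (fun a b => ((3 * φn a b - φm a b) / 2) ^ 4 / 4))) ≠ 0 :=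
      mul_ne_zero two_ne_zero hSne
    rw [heq4, ← mul_assoc, mul_one_div_cancel h2S, one_mul]
  have hT4 : ((rp + rn) / 2 / Real.sqrt (integ Lx Ly (fun a b => ((3 * φn a b - φm a b) / 2) ^ 4 / 4))) * integ Lx Ly (fun x y => ((3 * φn x y - φm x y) / 2) ^ 3 * (φp x y - φn x y)) = rp ^ 2 - rn ^ 2 := by
    rw [hJ]
    have e : (rp + rn) / 2 / Real.sqrt (integ Lx Ly (fun a b => ((3 * φn a b - φm a b) / 2) ^ 4 / 4))
          * (2 * Real.sqrt (integ Lx Ly (fun a b => ((3 * φn a b - φm a b) / 2) ^ 4 / 4)) * (rp - rn))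
        = Real.sqrt (integ Lx Ly (fun a b => ((3 * φn a b - φm a b) / 2) ^ 4 / 4))
            / Real.sqrt (integ Lx Ly (fun a b => ((3 * φn a b - φm a b) / 2) ^ 4 / 4))
            * ((rp + rn) * (rp - rn)) := by ring
    rw [e, div_self hSne, one_mul]; ring
  have hSμ : integ Lx Ly (fun x y => (φp x y - φn x y) * μ x y) = (1 : ℝ) * integ Lx Ly (fun x y => (lapC φp x y + lapC φn x y) / 2 * (lapC φp x y - lapC φn x y)) + 2 * (- integ Lx Ly (fun x y => (pdx φp x y - pdx φn x y) * ((3 * pdx φn x y - pdx φm x y) / 2) + (pdy φp x y - pdy φn x y) * ((3 * pdy φn x y - pdy φm x y) / 2))) + α * integ Lx Ly (fun x y => (φp x y - φn x y) * ((φp x y + φn x y) / 2)) + ((rp + rn) / 2 / Real.sqrt (integ Lx Ly (fun a b => ((3 * φn a b - φm a b) / 2) ^ 4 / 4))) * integ Lx Ly (fun x y => ((3 * φn x y - φm x y) / 2) ^ 3 * (φp x y - φn x y)) := by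
    rw [c2, c3, c4, hA1, hA2]
  -- Step 3 : master pointwise identity
  have ML : integ Lx Ly (fun x y => (1 : ℝ) * (1 / 2 * lapC φp x y ^ 2 - gradSqC φp x y + α / 2 * φp x y ^ 2)
        + (-1) * (1 / 2 * lapC φn x y ^ 2 - gradSqC φn x y + α / 2 * φn x y ^ 2)
        + (1 / 2) * (gradSqC (fun x y => φp x y - φn x y) x y)
        + (-(1 / 2)) * (gradSqC (fun x y => φn x y - φm x y) x y)
        + (1 / 2) * ((pdx φp x y - 2 * pdx φn x y + pdx φm x y) ^ 2 + (pdy φp x y - 2 * pdy φn x y + pdy φm x y) ^ 2))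
      = (1 : ℝ) * integ Lx Ly (fun x y => 1 / 2 * lapC φp x y ^ 2 - gradSqC φp x y + α / 2 * φp x y ^ 2) + (-1) * integ Lx Ly (fun x y => 1 / 2 * lapC φn x y ^ 2 - gradSqC φn x y + α / 2 * φn x y ^ 2) + (1 / 2) * integ Lx Ly (gradSqC (fun x y => φp x y - φn x y)) + (-(1 / 2)) * integ Lx Ly (gradSqC (fun x y => φn x y - φm x y)) + (1 / 2) * integ Lx Ly (fun x y => (pdx φp x y - 2 * pdx φn x y + pdx φm x y) ^ 2 + (pdy φp x y - 2 * pdy φn x y + pdy φm x y) ^ 2) :=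
    integ_lin5
      ((((sφp.lapCS.powS 2).constMulS (1 / 2)).subS sφp.gradSqS).addS ((sφp.powS 2).constMulS (α / 2)))
      ((((sφn.lapCS.powS 2).constMulS (1 / 2)).subS sφn.gradSqS).addS ((sφn.powS 2).constMulS (α / 2)))
      sdφ.gradSqS (sφn.subS sφm).gradSqS
      ((((sφp.pdx.subS (sφn.pdx.constMulS 2)).addS sφm.pdx).powS 2).addS
        (((sφp.pdy.subS (sφn.pdy.constMulS 2)).addS sφm.pdy).powS 2)) _ _ _ _ _
  have MR : integ Lx Ly (fun x y => (1 : ℝ) * ((lapC φp x y + lapC φn x y) / 2 * (lapC φp x y - lapC φn x y))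
        + (-2) * ((pdx φp x y - pdx φn x y) * ((3 * pdx φn x y - pdx φm x y) / 2) + (pdy φp x y - pdy φn x y) * ((3 * pdy φn x y - pdy φm x y) / 2))
        + α * ((φp x y - φn x y) * ((φp x y + φn x y) / 2)))
      = (1 : ℝ) * integ Lx Ly (fun x y => (lapC φp x y + lapC φn x y) / 2 * (lapC φp x y - lapC φn x y)) + (-2) * integ Lx Ly (fun x y => (pdx φp x y - pdx φn x y) * ((3 * pdx φn x y - pdx φm x y) / 2) + (pdy φp x y - pdy φn x y) * ((3 * pdy φn x y - pdy φm x y) / 2)) + α * integ Lx Ly (fun x y => (φp x y - φn x y) * ((φp x y + φn x y) / 2)) :=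
    integ_lin3 (((sφp.lapCS.addS sφn.lapCS).divConstS 2).mulS (sφp.lapCS.subS sφn.lapCS))
      (((sφp.pdx.subS sφn.pdx).mulS (((sφn.pdx.constMulS 3).subS sφm.pdx).divConstS 2)).addS
        ((sφp.pdy.subS sφn.pdy).mulS (((sφn.pdy.constMulS 3).subS sφm.pdy).divConstS 2)))
      (sdφ.mulS ((sφp.addS sφn).divConstS 2)) _ _ _
  have pt : integ Lx Ly (fun x y => (1 : ℝ) * (1 / 2 * lapC φp x y ^ 2 - gradSqC φp x y + α / 2 * φp x y ^ 2)
        + (-1) * (1 / 2 * lapC φn x y ^ 2 - gradSqC φn x y + α / 2 * φn x y ^ 2)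
        + (1 / 2) * (gradSqC (fun x y => φp x y - φn x y) x y)
        + (-(1 / 2)) * (gradSqC (fun x y => φn x y - φm x y) x y)
        + (1 / 2) * ((pdx φp x y - 2 * pdx φn x y + pdx φm x y) ^ 2 + (pdy φp x y - 2 * pdy φn x y + pdy φm x y) ^ 2)) = integ Lx Ly (fun x y => (1 : ℝ) * ((lapC φp x y + lapC φn x y) / 2 * (lapC φp x y - lapC φn x y))
        + (-2) * ((pdx φp x y - pdx φn x y) * ((3 * pdx φn x y - pdx φm x y) / 2) + (pdy φp x y - pdy φn x y) * ((3 * pdy φn x y - pdy φm x y) / 2))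
        + α * ((φp x y - φn x y) * ((φp x y + φn x y) / 2))) :=
    integ_congr (fun x y _ => by
      rw [gradSqC_eq φp x y, gradSqC_eq φn x y, gradSqC_eq (fun x y => φp x y - φn x y) x y, gradSqC_eq (fun x y => φn x y - φm x y) x y,
        pdx_sub sφp sφn, pdy_sub sφp sφn, pdx_sub sφn sφm, pdy_sub sφn sφm]
      ring)
  have F3 : integ Lx Ly (fun x y => 1 / 2 * lapC φp x y ^ 2 - gradSqC φp x y + α / 2 * φp x y ^ 2) - integ Lx Ly (fun x y => 1 / 2 * lapC φn x y ^ 2 - gradSqC φn x y + α / 2 * φn x y ^ 2) + 1 / 2 * integ Lx Ly (gradSqC (fun x y => φp x y - φn x y)) - 1 / 2 * integ Lx Ly (gradSqC (fun x y => φn x y - φm x y)) + 1 / 2 * integ Lx Ly (fun x y => (pdx φp x y - 2 * pdx φn x y + pdx φm x y) ^ 2 + (pdy φp x y - 2 * pdy φn x y + pdy φm x y) ^ 2)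
      = integ Lx Ly (fun x y => (lapC φp x y + lapC φn x y) / 2 * (lapC φp x y - lapC φn x y)) - 2 * integ Lx Ly (fun x y => (pdx φp x y - pdx φn x y) * ((3 * pdx φn x y - pdx φm x y) / 2) + (pdy φp x y - pdy φn x y) * ((3 * pdy φn x y - pdy φm x y) / 2)) + α * integ Lx Ly (fun x y => (φp x y - φn x y) * ((φp x y + φn x y) / 2)) := by
    rw [ML, MR] at pt
    linarith [pt]
  have Rnn : (0 : ℝ) ≤ integ Lx Ly (fun x y => (pdx φp x y - 2 * pdx φn x y + pdx φm x y) ^ 2 + (pdy φp x y - 2 * pdy φn x y + pdy φm x y) ^ 2) := integ_nonneg (fun x y => by positivity)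
  have hMne : M ≠ 0 := ne_of_gt hM
  have hkey : integ Lx Ly (fun x y => (φp x y - φn x y) * μ x y) + 1 / (2 * M) * integ Lx Ly (gradSqC ηp) - 1 / (2 * M) * integ Lx Ly (gradSqC ηn)
      = -(β / M) * Δt * integ Lx Ly (gradSqC (fun a b => (ηp a b + ηn a b) / 2)) := by
    have F1M : M * (1 / 2 * integ Lx Ly (gradSqC ηp) - 1 / 2 * integ Lx Ly (gradSqC ηn)
          + β * Δt * integ Lx Ly (gradSqC (fun a b => (ηp a b + ηn a b) / 2)))
        = M * (-(M * integ Lx Ly (fun x y => (φp x y - φn x y) * μ x y))) := by rw [F1]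
    field_simp
    linarith [F1M]
  unfold energyE
  linarith [hkey, hSμ, hT4, F3, Rnn]
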